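/- Let V be a 2N-dimensional real inner product space with a compatible complex structure I (an isometry with I² = −Id), and let h be a positive semidefinite symmetric bilinear form on V such that h(u,u) = h(v,v) whenever u, v lie in a common I-complex line Λ and have equal norm (i.e., h restricted to each complex line is invariant under the circle action e^{iθ}). Then h is Hermitian: h(I u, I v) = h(u, v) for all u, v ∈ V. -/

import Mathlib

/-!
For `w ≠ 0`, the vectors `w` and `J w` are orthogonal of equal norm, so they span a complex line
containing both; circle invariance on that line gives `h (J w) (J w) = h w w`, and polarizing
this diagonal identity with the symmetry of `h` gives `h (J u) (J v) = h u v`.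
-/

open scoped RealInnerProductSpace

section Polarization

variable {M : Type*} [AddCommGroup M] [Module ℝ M]

theorem LinearMap.apply_map_map_eq_of_forall_apply_map_self (h : M →ₗ[ℝ] M →ₗ[ℝ] ℝ)
    (hsymm : ∀ u v, h u v = h v u) {J : M →ₗ[ℝ] M} (hJ : ∀ w, h (J w) (J w) = h w w)
    (u v : M) : h (J u) (J v) = h u v := by
  have hsum := hJ (u + v)
  simp only [map_add, LinearMap.add_apply] at hsum
  linarith [hJ u, hJ v, hsymm (J u) (J v), hsymm u v]

end Polarization

section ComplexLine

variable {V : Type*} [NormedAddCommGroup V] [InnerProductSpace ℝ V]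

structure IsOrthogonalComplexStructure (J : V →ₗ[ℝ] V) : Prop where
  norm_map : ∀ v, ‖J v‖ = ‖v‖
  apply_apply : ∀ v, J (J v) = -v

def complexLine (J : V →ₗ[ℝ] V) (v : V) : Submodule ℝ V :=
  Submodule.span ℝ (Set.range ![v, J v])

theorem self_mem_complexLine (J : V →ₗ[ℝ] V) (v : V) : v ∈ complexLine J v :=
  Submodule.subset_span ⟨0, rfl⟩

theorem apply_mem_complexLine (J : V →ₗ[ℝ] V) (v : V) : J v ∈ complexLine J v :=
  Submodule.subset_span ⟨1, rfl⟩

theorem mapsTo_complexLine {J : V →ₗ[ℝ] V} (hJ2 : ∀ v, J (J v) = -v) (v : V) :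
    Set.MapsTo J (complexLine J v) (complexLine J v) := by
  suffices complexLine J v ≤ (complexLine J v).comap J from fun _ hw => this hw
  refine Submodule.span_le.mpr ?_
  rintro _ ⟨i, rfl⟩
  fin_cases i
  · exact apply_mem_complexLine J v
  · simpa [hJ2] using self_mem_complexLine J v

namespace IsOrthogonalComplexStructure

variable {J : V →ₗ[ℝ] V} (hJ : IsOrthogonalComplexStructure J)
include hJ

theorem inner_self_apply (v : V) : ⟪v, J v⟫ = 0 := by
  have hinner := (LinearMap.norm_map_iff_inner_map_map J).mp hJ.norm_map v (J v)
  rw [hJ.apply_apply, inner_neg_right, real_inner_comm] at hinner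
  linarith

theorem finrank_complexLine {v : V} (hv : v ≠ 0) : Module.finrank ℝ (complexLine J v) = 2 := by
  have hne : ∀ i, ![v, J v] i ≠ 0 := by
    intro i
    fin_cases i
    · exact hv
    · change J v ≠ 0
      rw [← norm_ne_zero_iff, hJ.norm_map]
      exact norm_ne_zero_iff.mpr hv
  have horth : Pairwise fun i j => ⟪![v, J v] i, ![v, J v] j⟫ = 0 := by
    intro i j hij
    fin_cases i <;> fin_cases j
    · exact absurd rfl hij
    · exact hJ.inner_self_apply v
    · exact (real_inner_comm _ _).trans (hJ.inner_self_apply v)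
    · exact absurd rfl hij
  rw [complexLine, finrank_span_eq_card (linearIndependent_of_ne_zero_of_inner_eq_zero hne horth),
    Fintype.card_fin]

end IsOrthogonalComplexStructure

end ComplexLine

theorem circle_invariant_form_is_hermitian_general {V : Type*}
    [NormedAddCommGroup V] [InnerProductSpace ℝ V]
    (J : V →ₗ[ℝ] V) (hJiso : ∀ v, ‖J v‖ = ‖v‖) (hJ2 : ∀ v, J (J v) = -v)
    (h : V →ₗ[ℝ] V →ₗ[ℝ] ℝ)
    (hsymm : ∀ u v, h u v = h v u)
    (hinv : ∀ u v : V,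
      (∃ W : Submodule ℝ V, Module.finrank ℝ W = 2 ∧ (∀ w ∈ W, J w ∈ W) ∧ u ∈ W ∧ v ∈ W) →
      ‖u‖ = ‖v‖ → h u u = h v v) :
    ∀ u v, h (J u) (J v) = h u v := by
  have hJ : IsOrthogonalComplexStructure J := ⟨hJiso, hJ2⟩
  refine h.apply_map_map_eq_of_forall_apply_map_self hsymm fun w => ?_
  rcases eq_or_ne w 0 with rfl | hw
  · simp
  exact hinv (J w) w ⟨complexLine J w, hJ.finrank_complexLine hw,
    fun _ hx => mapsTo_complexLine hJ2 w hx, apply_mem_complexLine J w, self_mem_complexLine J w⟩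
    (hJiso w)

/-- **Circle-invariance forces Hermitian symmetry.**  Let `V` be a `2N`-dimensional real inner
product space with a compatible complex structure `J` (an isometry with `J² = -1`), and let
`h` be a positive semidefinite symmetric bilinear form whose quadratic form takes equal values
on vectors of equal norm lying in a common `J`-complex line (a `2`-dimensional `J`-invariant
real subspace).  Then `h` is Hermitian: `h (J u) (J v) = h u v`. -/
theorem circle_invariant_form_is_hermitian {V : Type*}
    [NormedAddCommGroup V] [InnerProductSpace ℝ V] [FiniteDimensional ℝ V]
    (N : ℕ) (hdim : Module.finrank ℝ V = 2 * N)
    (J : V →ₗ[ℝ] V) (hJiso : ∀ v, ‖J v‖ = ‖v‖) (hJ2 : ∀ v, J (J v) = -v)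
    (h : V →ₗ[ℝ] V →ₗ[ℝ] ℝ)
    (hsymm : ∀ u v, h u v = h v u)
    (hpos : ∀ u, 0 ≤ h u u)
    (hinv : ∀ u v : V,
      (∃ W : Submodule ℝ V, Module.finrank ℝ W = 2 ∧ (∀ w ∈ W, J w ∈ W) ∧ u ∈ W ∧ v ∈ W) →
      ‖u‖ = ‖v‖ → h u u = h v v) :
    ∀ u v, h (J u) (J v) = h u v :=
  circle_invariant_form_is_hermitian_general J hJiso hJ2 h hsymm hinv
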